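/- arXiv:1012.0213 — 2 statements merged into one kernel-verified Lean document; each statement's English description precedes it below -/
import Mathlib

section
/- Let p and ℓ be distinct primes. Every continuous group homomorphism χ : ℤ_p^× → ℚ_ℓ^× is trivial on 1 + p^{n+1}ℤ_p for some natural number n; that is, there exists n ≥ 0 such that χ(u) = 1 for every unit u ∈ ℤ_p^× with u - 1 ∈ p^{n+1}ℤ_p. -/
/-!
A neighbourhood of `1` in `ℤ_pˣ` on which `χ` takes values of norm `‖χ u - 1‖ < 1` contains some
`1 + p^(n+1)ℤ_p`. For `u` in it, `u ^ p ^ m` tends to `1`, so `χ u ^ p ^ m → 1`; but since `p` is a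
unit in `ℤ_ℓ`, raising to the `p`-th power does not change `‖x - 1‖` on the open unit ball around
`1` in `ℚ_ℓ`. Hence `‖χ u - 1‖ = 0`.
-/

open Filter Topology

section Ultrametric

variable {K : Type*} [NormedDivisionRing K] [IsUltrametricDist K] {x : K}

lemma norm_pow_sub_one_le (hx : ‖x‖ ≤ 1) (i : ℕ) : ‖x ^ i - 1‖ ≤ ‖x - 1‖ := by
  rw [← geom_sum_mul, norm_mul]
  refine mul_le_of_le_one_left (norm_nonneg _) ?_
  refine IsUltrametricDist.norm_sum_le_of_forall_le_of_nonneg zero_le_one fun j _ => ?_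
  rw [norm_pow]
  exact pow_le_one₀ (norm_nonneg _) hx

lemma norm_pow_sub_one_eq {n : ℕ} (hn : ‖(n : K)‖ = 1) (hx : ‖x - 1‖ < 1) :
    ‖x ^ n - 1‖ = ‖x - 1‖ := by
  have hx_le : ‖x‖ ≤ 1 := by
    simpa using (IsUltrametricDist.norm_add_le_max (x - 1) 1).trans (max_le hx.le norm_one.le)
  have hgeom : ∑ i ∈ Finset.range n, x ^ i = n + ∑ i ∈ Finset.range n, (x ^ i - 1) := by
    simp [Finset.sum_sub_distrib]
  have herr : ‖∑ i ∈ Finset.range n, (x ^ i - 1)‖ < 1 :=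
    (IsUltrametricDist.norm_sum_le_of_forall_le_of_nonneg (norm_nonneg _)
      fun i _ => norm_pow_sub_one_le hx_le i).trans_lt hx
  have hsum : ‖∑ i ∈ Finset.range n, x ^ i‖ = 1 := by
    rw [hgeom, IsUltrametricDist.norm_add_eq_max_of_norm_ne_norm (by rw [hn]; exact herr.ne'),
      hn, max_eq_left herr.le]
  rw [← geom_sum_mul, norm_mul, hsum, one_mul]

lemma norm_pow_pow_sub_one_eq {n : ℕ} (hn : ‖(n : K)‖ = 1) (hx : ‖x - 1‖ < 1) (m : ℕ) :
    ‖x ^ n ^ m - 1‖ = ‖x - 1‖ := by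
  induction m with
  | zero => simp
  | succ m ih => rw [pow_succ, pow_mul, norm_pow_sub_one_eq hn (ih ▸ hx), ih]

end Ultrametric

namespace PadicInt

variable {p : ℕ} [Fact p.Prime]

lemma exists_forall_pow_dvd_sub_one_mem {s : Set ℤ_[p]ˣ} (hs : s ∈ 𝓝 1) :
    ∃ n : ℕ, ∀ u : ℤ_[p]ˣ, (p : ℤ_[p]) ^ (n + 1) ∣ (u : ℤ_[p]) - 1 → u ∈ s := by
  rw [Units.isOpenEmbedding_val.isEmbedding.nhds_eq_comap, mem_comap] at hs
  obtain ⟨t, ht, hts⟩ := hs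
  obtain ⟨δ, hδ, hball⟩ := Metric.mem_nhds_iff.mp ht
  obtain ⟨n, hn⟩ := exists_pow_lt_of_lt_one hδ (norm_natCast_lt_one_iff.mpr (dvd_refl p))
  refine ⟨n, fun u ⟨c, hc⟩ => hts (hball ?_)⟩
  rw [Metric.mem_ball, dist_eq_norm, Units.val_one, hc, norm_mul, norm_pow]
  calc ‖(p : ℤ_[p])‖ ^ (n + 1) * ‖c‖ ≤ ‖(p : ℤ_[p])‖ ^ n :=
        mul_le_of_le_one_right (by positivity) (norm_le_one c) |>.trans
          (pow_le_pow_of_le_one (norm_nonneg _) (norm_le_one _) n.le_succ)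
    _ < δ := hn

end PadicInt

/-- Let `p` and `ℓ` be distinct primes. Every continuous group homomorphism
`χ : ℤ_pˣ → ℚ_ℓˣ` is trivial on `1 + p^(n+1)ℤ_p` for some natural number `n`. -/
theorem continuous_padic_char_finite_depth (p ℓ : ℕ) [Fact p.Prime] [Fact ℓ.Prime]
    (hpl : p ≠ ℓ) (χ : ℤ_[p]ˣ →* ℚ_[ℓ]ˣ) (hχ : Continuous χ) :
    ∃ n : ℕ, ∀ u : ℤ_[p]ˣ, (p : ℤ_[p]) ^ (n + 1) ∣ ((u : ℤ_[p]) - 1) → χ u = 1 := by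
  have hp : ‖(p : ℚ_[ℓ])‖ = 1 :=
    Padic.norm_natCast_eq_one_iff.mpr ((Nat.coprime_primes Fact.out Fact.out).mpr hpl.symm)
  have close (ε : ℝ) (hε : 0 < ε) : ∃ n : ℕ, ∀ u : ℤ_[p]ˣ,
      (p : ℤ_[p]) ^ (n + 1) ∣ (u : ℤ_[p]) - 1 → ‖(χ u : ℚ_[ℓ]) - 1‖ < ε := by
    have hball : (fun u ↦ (χ u : ℚ_[ℓ])) ⁻¹' Metric.ball 1 ε ∈ 𝓝 1 :=
      (Units.continuous_val.comp hχ).continuousAt.preimage_mem_nhds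
        (by simpa using Metric.ball_mem_nhds 1 hε)
    simpa [dist_eq_norm] using PadicInt.exists_forall_pow_dvd_sub_one_mem hball
  obtain ⟨n, hn⟩ := close 1 one_pos
  refine ⟨n, fun u hu => Units.ext ?_⟩
  rw [Units.val_one, ← sub_eq_zero, ← norm_le_zero_iff]
  refine le_of_forall_pos_lt_add fun ε hε => ?_
  obtain ⟨m, hm⟩ := close ε hε
  have hpow : (p : ℤ_[p]) ^ (m + 1) ∣ ((u ^ p ^ m : ℤ_[p]ˣ) : ℤ_[p]) - 1 := by
    simpa using dvd_sub_pow_of_dvd_sub ((dvd_pow_self _ n.succ_ne_zero).trans hu) m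
  simpa [Units.val_pow_eq_pow_val, norm_pow_pow_sub_one_eq hp (hn u hu)] using hm _ hpow
end

section
/- Let p and ℓ be distinct primes and let χ : ℤ_p^× → ℚ_ℓ^× be a continuous group homomorphism. Then there exist a natural number n and a group homomorphism χ̄ : (ℤ/p^{n+1}ℤ)^× → ℚ_ℓ^× such that χ = χ̄ ∘ π, where π : ℤ_p^× → (ℤ/p^{n+1}ℤ)^× is the homomorphism induced on units by reduction modulo p^{n+1}. -/
/-!
The kernels `1 + p^(n+1) ℤ_p` of reduction form a basis of neighbourhoods of `1` in `ℤ_pˣ`, so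
by continuity `χ` maps one of them into the ball `‖v - 1‖ < ‖ℓ‖` of `ℚ_ℓ`. As `ℓ` is a unit in
`ℤ_p`, Hensel's lemma makes every element `u` of that kernel an `ℓ^k`-th power `w^(ℓ^k)` of an
element of the same kernel, for every `k`. On the ball, `‖v^ℓ - 1‖ = ‖ℓ‖ ‖v - 1‖`, so
`χ u = (χ w)^(ℓ^k)` lies within `‖ℓ‖^(k+1)` of `1` for all `k`; hence `χ u = 1`, and `χ` factors
through the quotient by the kernel.
-/

open Finset Filter Topology

section Ultrametric

variable {K : Type*} [NormedCommRing K] [NormOneClass K] [IsUltrametricDist K]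

lemma norm_geom_sum_sub_natCast_le {z : K} (hz : ‖z‖ ≤ 1) (N : ℕ) :
    ‖∑ i ∈ range N, z ^ i - N‖ ≤ ‖z - 1‖ := by
  have : (N : K) = ∑ _i ∈ range N, 1 := by simp
  rw [this, ← sum_sub_distrib]
  refine IsUltrametricDist.norm_sum_le_of_forall_le_of_nonneg (norm_nonneg _) fun i _ ↦ ?_
  calc ‖z ^ i - 1‖ = ‖(∑ j ∈ range i, z ^ j) * (z - 1)‖ := by rw [geom_sum_mul]
    _ ≤ ‖∑ j ∈ range i, z ^ j‖ * ‖z - 1‖ := norm_mul_le _ _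
    _ ≤ 1 * ‖z - 1‖ := by
      gcongr
      exact IsUltrametricDist.norm_sum_le_of_forall_le_of_nonneg zero_le_one
        fun j _ ↦ (norm_pow_le _ _).trans (pow_le_one₀ (norm_nonneg _) hz)
    _ = ‖z - 1‖ := one_mul _

lemma norm_geom_sum_eq_of_norm_sub_one_lt {z : K} {N : ℕ} (hz : ‖z - 1‖ < ‖(N : K)‖) :
    ‖∑ i ∈ range N, z ^ i‖ = ‖(N : K)‖ := by
  have hz₁ : ‖z‖ ≤ 1 := by
    simpa [(hz.trans_le (IsUltrametricDist.norm_natCast_le_one K N)).le] using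
      IsUltrametricDist.norm_add_one_le_max_norm_one (z - 1)
  have hlt := (norm_geom_sum_sub_natCast_le hz₁ N).trans_lt hz
  simpa [max_eq_right hlt.le] using IsUltrametricDist.norm_add_eq_max_of_norm_ne_norm hlt.ne

variable [NormMulClass K]

lemma norm_pow_sub_one_eq_of_norm_sub_one_lt {z : K} {N : ℕ} (hz : ‖z - 1‖ < ‖(N : K)‖) :
    ‖z ^ N - 1‖ = ‖(N : K)‖ * ‖z - 1‖ := by
  rw [← geom_sum_mul, norm_mul, norm_geom_sum_eq_of_norm_sub_one_lt hz]

lemma norm_pow_pow_sub_one_eq_of_norm_sub_one_lt {z : K} {N : ℕ} (hz : ‖z - 1‖ < ‖(N : K)‖)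
    (k : ℕ) : ‖z ^ N ^ k - 1‖ = ‖(N : K)‖ ^ k * ‖z - 1‖ := by
  induction k with
  | zero => simp
  | succ k ih =>
    have hle : ‖z ^ N ^ k - 1‖ ≤ ‖z - 1‖ := by
      rw [ih]
      exact mul_le_of_le_one_left (norm_nonneg _)
        (pow_le_one₀ (norm_nonneg _) (IsUltrametricDist.norm_natCast_le_one K N))
    rw [pow_succ, pow_mul, norm_pow_sub_one_eq_of_norm_sub_one_lt (hle.trans_lt hz), ih]
    ring

lemma eq_one_of_forall_exists_pow_pow_eq {v : K} {N : ℕ} (hN : ‖(N : K)‖ < 1)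
    (hv : ∀ k : ℕ, ∃ w : K, ‖w - 1‖ < ‖(N : K)‖ ∧ w ^ N ^ k = v) : v = 1 := by
  have hbound : ∀ k : ℕ, ‖v - 1‖ ≤ ‖(N : K)‖ ^ k * ‖(N : K)‖ := fun k ↦ by
    obtain ⟨w, hw, rfl⟩ := hv k
    rw [norm_pow_pow_sub_one_eq_of_norm_sub_one_lt hw]
    gcongr
  have hlim : Tendsto (fun k : ℕ ↦ ‖(N : K)‖ ^ k * ‖(N : K)‖) atTop (𝓝 0) := by
    simpa using (tendsto_pow_atTop_nhds_zero_of_lt_one (norm_nonneg _) hN).mul_const ‖(N : K)‖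
  rw [← sub_eq_zero, ← norm_le_zero_iff]
  exact ge_of_tendsto' hlim hbound

end Ultrametric

namespace PadicInt

variable {p : ℕ} [Fact p.Prime]

lemma exists_pow_eq_of_norm_sub_one_lt {N : ℕ} (hN : ‖(N : ℤ_[p])‖ = 1) {x : ℤ_[p]}
    (hx : ‖x - 1‖ < 1) : ∃ y : ℤ_[p], y ^ N = x ∧ ‖y - 1‖ = ‖x - 1‖ := by
  let F : Polynomial ℤ_[p] := .X ^ N - .C x
  have hF' : F.derivative.aeval (1 : ℤ_[p]) = N := by simp [F, Polynomial.derivative_X_pow]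
  have hF : ‖F.aeval (1 : ℤ_[p])‖ < ‖F.derivative.aeval (1 : ℤ_[p])‖ ^ 2 := by
    rw [hF', hN, one_pow]
    simpa [F, norm_sub_rev] using hx
  obtain ⟨y, hy, hy₁, -⟩ := hensels_lemma hF
  rw [hF', hN] at hy₁
  have hyx : y ^ N = x := by simpa [F, sub_eq_zero] using hy
  refine ⟨y, hyx, ?_⟩
  rw [← hyx, norm_pow_sub_one_eq_of_norm_sub_one_lt (hN ▸ hy₁), hN, one_mul]

lemma mem_ker_unitsMap_toZModPow {n : ℕ} {u : ℤ_[p]ˣ} :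
    u ∈ (Units.map (toZModPow (p := p) n).toMonoidHom).ker ↔
      ‖(u : ℤ_[p]) - 1‖ ≤ (p : ℝ) ^ (-n : ℤ) := by
  rw [norm_le_pow_iff_mem_span_pow, ← ker_toZModPow, RingHom.mem_ker, map_sub, map_one,
    sub_eq_zero, MonoidHom.mem_ker, Units.ext_iff]
  rfl

lemma exists_pow_eq_of_mem_ker_unitsMap_toZModPow {N n : ℕ} (hN : ‖(N : ℤ_[p])‖ = 1)
    (hn : n ≠ 0) {u : ℤ_[p]ˣ} (hu : u ∈ (Units.map (toZModPow (p := p) n).toMonoidHom).ker) :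
    ∃ w ∈ (Units.map (toZModPow (p := p) n).toMonoidHom).ker, w ^ N = u := by
  rw [mem_ker_unitsMap_toZModPow] at hu
  have hp : (1 : ℝ) < p := by exact_mod_cast (Fact.out : p.Prime).one_lt
  obtain ⟨y, hyu, hy⟩ := exists_pow_eq_of_norm_sub_one_lt hN
    (hu.trans_lt (zpow_lt_one_of_neg₀ hp (by omega)))
  have hN₀ : N ≠ 0 := by rintro rfl; simp at hN
  have hy_unit : IsUnit y := (isUnit_pow_iff hN₀).mp (hyu ▸ u.isUnit)
  refine ⟨hy_unit.unit, ?_, Units.ext (by simpa using hyu)⟩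
  rwa [mem_ker_unitsMap_toZModPow, IsUnit.unit_spec, hy]

lemma exists_ker_unitsMap_toZModPow_subset {U : Set ℤ_[p]ˣ} (hU : U ∈ 𝓝 1) :
    ∃ n : ℕ, ((Units.map (toZModPow (p := p) (n + 1)).toMonoidHom).ker : Set ℤ_[p]ˣ) ⊆ U := by
  rw [Units.isOpenEmbedding_val.nhds_eq_comap, Units.val_one, mem_comap] at hU
  obtain ⟨t, ht, htU⟩ := hU
  obtain ⟨ε, hε, hεt⟩ := Metric.mem_nhds_iff.mp ht
  obtain ⟨n, hn⟩ := exists_pow_neg_lt p hε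
  refine ⟨n, fun u hu ↦ htU (hεt ?_)⟩
  rw [SetLike.mem_coe, mem_ker_unitsMap_toZModPow] at hu
  have hp : (1 : ℝ) ≤ p := by exact_mod_cast (Fact.out : p.Prime).one_le
  rw [Metric.mem_ball, dist_eq_norm]
  exact hu.trans_lt (lt_of_le_of_lt (zpow_le_zpow_right₀ hp (by omega)) hn)

lemma unitsMap_toZModPow_surjective (n : ℕ) :
    Function.Surjective (Units.map (toZModPow (p := p) (n + 1)).toMonoidHom) :=
  have : Fact (1 < p ^ (n + 1)) := ⟨Nat.one_lt_pow n.succ_ne_zero (Fact.out : p.Prime).one_lt⟩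
  let f := toZModPow (p := p) (n + 1)
  IsLocalRing.surjective_units_map_of_local_ringHom f (ZMod.ringHom_surjective f)
    (.of_surjective f (ZMod.ringHom_surjective f))

end PadicInt

/-- Let `p` and `ℓ` be distinct primes and `χ : ℤ_pˣ → ℚ_ℓˣ` a continuous group
homomorphism. Then `χ` factors through the units of `ℤ/p^(n+1)ℤ` for some `n`:
there is a homomorphism `χ̄ : (ℤ/p^(n+1)ℤ)ˣ → ℚ_ℓˣ` with `χ = χ̄ ∘ π`, where `π`
is induced on units by reduction modulo `p^(n+1)`. -/
theorem continuous_padic_char_factors (p ℓ : ℕ) [Fact p.Prime] [Fact ℓ.Prime]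
    (hpl : p ≠ ℓ) (χ : ℤ_[p]ˣ →* ℚ_[ℓ]ˣ) (hχ : Continuous χ) :
    ∃ (n : ℕ) (χbar : (ZMod (p ^ (n + 1)))ˣ →* ℚ_[ℓ]ˣ),
      χ = χbar.comp (Units.map (PadicInt.toZModPow (p := p) (n + 1)).toMonoidHom) := by
  have hℓ : 0 < ‖(ℓ : ℚ_[ℓ])‖ := by
    rw [Padic.norm_p]; exact inv_pos.mpr (by exact_mod_cast (Fact.out : ℓ.Prime).pos)
  have hU : (fun u ↦ (χ u : ℚ_[ℓ])) ⁻¹' Metric.ball 1 ‖(ℓ : ℚ_[ℓ])‖ ∈ 𝓝 1 :=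
    (Units.continuous_val.comp hχ).continuousAt.preimage_mem_nhds <| by
      simpa using Metric.ball_mem_nhds 1 hℓ
  obtain ⟨n, hn⟩ := PadicInt.exists_ker_unitsMap_toZModPow_subset hU
  have hℓ_pow (k : ℕ) : ‖((ℓ ^ k : ℕ) : ℤ_[p])‖ = 1 :=
    PadicInt.norm_natCast_eq_one_iff.mpr <|
      ((Nat.coprime_primes Fact.out Fact.out).mpr hpl).pow_right k
  have hker : (Units.map (PadicInt.toZModPow (p := p) (n + 1)).toMonoidHom).ker ≤ χ.ker := by
    intro u hu
    refine MonoidHom.mem_ker.mpr <| Units.ext <| eq_one_of_forall_exists_pow_pow_eq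
      Padic.norm_p_lt_one fun k ↦ ?_
    obtain ⟨w, hw, rfl⟩ :=
      PadicInt.exists_pow_eq_of_mem_ker_unitsMap_toZModPow (hℓ_pow k) n.succ_ne_zero hu
    exact ⟨χ w, by simpa [dist_eq_norm] using hn hw, by simp⟩
  exact ⟨n, (MonoidHom.liftOfSurjective _ (PadicInt.unitsMap_toZModPow_surjective n)) ⟨χ, hker⟩,
    (MonoidHom.liftOfRightInverse_comp _ _ _ ⟨χ, hker⟩).symm⟩
end
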